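/- arXiv:2111.10822 — 6 statements merged into one kernel-verified Lean document; each statement's English description precedes it below -/
import Mathlib

section
/- For every integer n ≥ 2 and every configuration C ⊆ {0,...,n-1}, the expected potential after one step of probabilistic bubble-sort satisfies (1/(n-1)) · Σ_{j=0}^{n-2} P(step_j(C)) ≤ (1 - 1/(4(n-1))) · P(C), where step_j(C) = (C \ {j}) ∪ {j+1} if j ∈ C and j+1 ∉ C, and step_j(C) = C otherwise. -/
/-- `lcount C i` is the number of ones strictly before position `i`,
i.e. `|C ∩ {0,…,i-1}|`. -/
def lcount (C : Finset ℕ) (i : ℕ) : ℕ := (C ∩ Finset.range i).card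

/-- Potential of a configuration `C ⊆ {0,…,n-1}`:
`P(C) = Σ_{i∈C} (2^(n-k+2l_i-i) - 2^(l_i))` where `k = |C|`, `l_i = |C ∩ {0,…,i-1}|`. -/
def potential (n : ℕ) (C : Finset ℕ) : ℕ :=
  ∑ i ∈ C, (2 ^ (n - C.card + 2 * lcount C i - i) - 2 ^ lcount C i)

/-- One step of probabilistic bubble-sort at position `j`: if `j ∈ C` and `j+1 ∉ C`,
swap, i.e. `(C \ {j}) ∪ {j+1}`; otherwise unchanged. -/
def bstep (C : Finset ℕ) (j : ℕ) : Finset ℕ :=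
  if j ∈ C ∧ j + 1 ∉ C then insert (j + 1) (C.erase j) else C

lemma lcount_succ_of_mem {C : Finset ℕ} {j : ℕ} (h : j ∈ C) :
    lcount C (j + 1) = lcount C j + 1 := by
  unfold lcount
  have : C ∩ Finset.range (j + 1) = insert j (C ∩ Finset.range j) := by
    ext x
    simp only [Finset.mem_inter, Finset.mem_range, Finset.mem_insert]
    constructor
    · rintro ⟨hx, hlt⟩
      rcases Nat.lt_succ_iff_lt_or_eq.mp hlt with h' | rfl
      · exact Or.inr ⟨hx, h'⟩
      · exact Or.inl rfl
    · rintro (rfl | ⟨hx, hlt⟩)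
      · exact ⟨h, Nat.lt_succ_self _⟩
      · exact ⟨hx, hlt.trans (Nat.lt_succ_self _)⟩
  rw [this, Finset.card_insert_of_notMem (by simp)]

lemma lcount_succ_of_not_mem {C : Finset ℕ} {j : ℕ} (h : j ∉ C) :
    lcount C (j + 1) = lcount C j := by
  unfold lcount
  congr 1
  ext x
  simp only [Finset.mem_inter, Finset.mem_range]
  constructor
  · rintro ⟨hx, hlt⟩
    refine ⟨hx, ?_⟩
    rcases Nat.lt_succ_iff_lt_or_eq.mp hlt with h' | rfl
    · exact h'
    · exact absurd hx h
  · rintro ⟨hx, hlt⟩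
    exact ⟨hx, hlt.trans (Nat.lt_succ_self _)⟩

lemma card_split (C : Finset ℕ) (i : ℕ) :
    C.card = lcount C i + (C \ Finset.range i).card := by
  unfold lcount
  rw [Finset.card_inter_add_card_sdiff]

lemma sdiff_sub (n : ℕ) {C : Finset ℕ} (hC : C ⊆ Finset.range n) (i : ℕ) :
    (C \ Finset.range i).card ≤ n - i := by
  have : C \ Finset.range i ⊆ Finset.Ico i n := by
    intro x hx
    simp only [Finset.mem_sdiff, Finset.mem_range] at hx
    simp only [Finset.mem_Ico]
    exact ⟨Nat.not_lt.mp hx.2, Finset.mem_range.mp (hC hx.1)⟩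
  simpa using Finset.card_le_card this

lemma pguard {n : ℕ} {C : Finset ℕ} (hC : C ⊆ Finset.range n) {i : ℕ} (hi : i ∈ C) :
    C.card + i ≤ n + lcount C i := by
  have h1 := card_split C i
  have h2 := sdiff_sub n hC i
  have h3 : i < n := Finset.mem_range.mp (hC hi)
  omega

lemma card_le_n {n : ℕ} {C : Finset ℕ} (hC : C ⊆ Finset.range n) : C.card ≤ n := by
  simpa using Finset.card_le_card hC

lemma pguard_strict {n : ℕ} {C : Finset ℕ} (hC : C ⊆ Finset.range n) {j : ℕ}
    (hj : j ∈ C) (hj1 : j + 1 ∉ C) (hjn : j + 1 < n) :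
    C.card + j + 1 ≤ n + lcount C j := by
  have h1 := card_split C (j + 2)
  have h2 := sdiff_sub n hC (j + 2)
  have h3 : lcount C (j + 2) = lcount C j + 1 := by
    rw [show j + 2 = (j+1) + 1 from rfl, lcount_succ_of_not_mem hj1, lcount_succ_of_mem hj]
  omega

lemma exists_top (C : Finset ℕ) (i : ℕ) : ∃ t, i ≤ t ∧ t + 1 ∉ C := by
  refine ⟨i + C.sup id, Nat.le_add_right _ _, fun h => ?_⟩
  have := Finset.le_sup (f := id) h
  simp only [id] at this
  omega

def btop (C : Finset ℕ) (i : ℕ) : ℕ := Nat.find (exists_top C i)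

lemma btop_ge (C : Finset ℕ) (i : ℕ) : i ≤ btop C i := (Nat.find_spec (exists_top C i)).1

lemma btop_succ_not_mem (C : Finset ℕ) (i : ℕ) : btop C i + 1 ∉ C :=
  (Nat.find_spec (exists_top C i)).2

lemma btop_min {C : Finset ℕ} {i t : ℕ} (h1 : i ≤ t) (h2 : t + 1 ∉ C) : btop C i ≤ t :=
  Nat.find_min' _ ⟨h1, h2⟩

lemma block {C : Finset ℕ} {i : ℕ} (hi : i ∈ C) :
    ∀ m, i ≤ m → m ≤ btop C i → m ∈ C ∧ lcount C m = lcount C i + (m - i) := by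
  intro m
  induction m with
  | zero => intro h1 _; have : i = 0 := Nat.le_zero.mp h1; subst this; simpa using hi
  | succ m ih =>
    intro h1 h2
    rcases Nat.lt_succ_iff_lt_or_eq.mp (Nat.lt_succ_of_le h1) with h1' | rfl
    · have h1'' : i ≤ m := Nat.lt_succ_iff.mp h1'
      have hm := ih h1'' (le_trans (Nat.le_succ m) h2)
      have hmem : m + 1 ∈ C := by
        by_contra hc
        have := btop_min h1'' hc
        omega
      refine ⟨hmem, ?_⟩
      rw [lcount_succ_of_mem hm.1, hm.2]
      omega
    · exact ⟨hi, by omega⟩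

section LemA
variable {n j : ℕ} {C : Finset ℕ}

lemma bstep_card (hj : j ∈ C) (hj1 : j + 1 ∉ C) :
    (insert (j + 1) (C.erase j)).card = C.card := by
  rw [Finset.card_insert_of_notMem (by simp only [Finset.mem_erase]; exact fun h => hj1 h.2),
    Finset.card_erase_of_mem hj]
  have : 1 ≤ C.card := Finset.card_pos.mpr ⟨j, hj⟩
  omega

lemma lcount_bstep_lt (hj : j ∈ C) (hj1 : j + 1 ∉ C) {i : ℕ} (hij : i ≤ j) :
    lcount (insert (j + 1) (C.erase j)) i = lcount C i := by
  unfold lcount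
  congr 1
  ext x
  simp only [Finset.mem_inter, Finset.mem_range, Finset.mem_insert, Finset.mem_erase]
  constructor
  · rintro ⟨(rfl | ⟨hxj, hx⟩), hlt⟩
    · omega
    · exact ⟨hx, hlt⟩
  · rintro ⟨hx, hlt⟩
    exact ⟨Or.inr ⟨by omega, hx⟩, hlt⟩

lemma lcount_bstep_gt (hj : j ∈ C) (hj1 : j + 1 ∉ C) {i : ℕ} (hij : j + 1 < i) :
    lcount (insert (j + 1) (C.erase j)) i = lcount C i := by
  unfold lcount
  have h1 : insert (j + 1) (C.erase j) ∩ Finset.range i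
      = insert (j + 1) ((C ∩ Finset.range i).erase j) := by
    ext x
    simp only [Finset.mem_inter, Finset.mem_range, Finset.mem_insert, Finset.mem_erase]
    constructor
    · rintro ⟨(rfl | ⟨hxj, hx⟩), hlt⟩
      · exact Or.inl rfl
      · exact Or.inr ⟨hxj, hx, hlt⟩
    · rintro (rfl | ⟨hxj, hx, hlt⟩)
      · exact ⟨Or.inl rfl, hij⟩
      · exact ⟨Or.inr ⟨hxj, hx⟩, hlt⟩
  rw [h1, Finset.card_insert_of_notMem
      (by simp only [Finset.mem_erase, Finset.mem_inter]; exact fun h => hj1 h.2.1),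
    Finset.card_erase_of_mem (by simp only [Finset.mem_inter, Finset.mem_range]; exact ⟨hj, by omega⟩)]
  have : 1 ≤ (C ∩ Finset.range i).card :=
    Finset.card_pos.mpr ⟨j, by simp only [Finset.mem_inter, Finset.mem_range]; exact ⟨hj, by omega⟩⟩
  omega

lemma lcount_bstep_succ (hj : j ∈ C) (hj1 : j + 1 ∉ C) :
    lcount (insert (j + 1) (C.erase j)) (j + 1) = lcount C j := by
  unfold lcount
  congr 1
  ext x
  simp only [Finset.mem_inter, Finset.mem_range, Finset.mem_insert, Finset.mem_erase]
  constructor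
  · rintro ⟨(rfl | ⟨hxj, hx⟩), hlt⟩
    · omega
    · exact ⟨hx, by omega⟩
  · rintro ⟨hx, hlt⟩
    exact ⟨Or.inr ⟨by omega, hx⟩, by omega⟩

lemma potential_bstep (hC : C ⊆ Finset.range n) (hj : j ∈ C) (hj1 : j + 1 ∉ C)
    (hjn : j + 1 < n) :
    potential n (bstep C j) + 2 ^ (n - C.card + 2 * lcount C j - (j + 1)) = potential n C := by
  have hg := pguard hC hj
  have hk := card_le_n hC
  have hs := pguard_strict hC hj hj1 hjn
  have hnotmem : j + 1 ∉ C.erase j := by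
    simp only [Finset.mem_erase]; exact fun h => hj1 h.2
  unfold bstep potential
  rw [if_pos ⟨hj, hj1⟩, bstep_card hj hj1, Finset.sum_insert hnotmem, lcount_bstep_succ hj hj1,
    ← Finset.add_sum_erase _ _ hj]
  have hsum : ∑ i ∈ C.erase j,
      (2 ^ (n - C.card + 2 * lcount (insert (j+1) (C.erase j)) i - i)
        - 2 ^ lcount (insert (j+1) (C.erase j)) i)
      = ∑ i ∈ C.erase j, (2 ^ (n - C.card + 2 * lcount C i - i) - 2 ^ lcount C i) := by
    apply Finset.sum_congr rfl
    intro i hi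
    have hij : i ≠ j := (Finset.mem_erase.mp hi).1
    have hiC : i ∈ C := (Finset.mem_erase.mp hi).2
    have hij1 : i ≠ j + 1 := fun h => hj1 (h ▸ hiC)
    rcases Nat.lt_or_ge i j with h | h
    · rw [lcount_bstep_lt hj hj1 (le_of_lt h)]
    · have : j + 1 < i := by omega
      rw [lcount_bstep_gt hj hj1 this]
  rw [hsum]
  have hE : n - C.card + 2 * lcount C j - j = (n - C.card + 2 * lcount C j - (j + 1)) + 1 := by
    omega
  rw [hE, pow_succ]
  have hle : 2 ^ lcount C j ≤ 2 ^ (n - C.card + 2 * lcount C j - (j + 1)) :=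
    Nat.pow_le_pow_right (by norm_num) (by omega)
  omega

end LemA

lemma sum_two_pow (N : ℕ) : ∑ m ∈ Finset.range N, 2 ^ m + 1 = 2 ^ N := by
  induction N with
  | zero => simp
  | succ N ih => rw [Finset.sum_range_succ, pow_succ]; omega

lemma potential_le {n : ℕ} {C : Finset ℕ} (hn : 2 ≤ n) (hC : C ⊆ Finset.range n) :
    potential n C ≤ 4 * ∑ j ∈ (Finset.range (n-1)).filter (fun j => j ∈ C ∧ j + 1 ∉ C),
      2 ^ (n - C.card + 2 * lcount C j - (j + 1)) := by
  classical
  set S := (Finset.range (n-1)).filter (fun j => j ∈ C ∧ j + 1 ∉ C) with hS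
  have hk := card_le_n hC
  have hnC : n ∉ C := fun h => by simpa using Finset.mem_range.mp (hC h)
  -- btop maps C into insert (n-1) S
  have hmaps : ∀ i ∈ C, btop C i ∈ insert (n-1) S := by
    intro i hi
    have hin : i < n := Finset.mem_range.mp (hC hi)
    have hle : btop C i ≤ n - 1 := btop_min (by omega) (by rw [show n-1+1 = n by omega]; exact hnC)
    rcases eq_or_lt_of_le hle with h | h
    · rw [h]; exact Finset.mem_insert_self _ _
    · refine Finset.mem_insert_of_mem ?_
      rw [hS, Finset.mem_filter, Finset.mem_range]
      exact ⟨h, (block hi _ (btop_ge C i) le_rfl).1, btop_succ_not_mem C i⟩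
  have hfib := Finset.sum_fiberwise_of_maps_to hmaps
    (fun i => 2 ^ (n - C.card + 2 * lcount C i - i) - 2 ^ lcount C i)
  have hnotS : (n-1) ∉ S := by
    rw [hS, Finset.mem_filter, Finset.mem_range]; omega
  rw [show potential n C = _ from (hfib).symm, Finset.sum_insert hnotS]
  -- fiber at n-1 is zero
  have hzero : ∑ i ∈ C.filter (fun i => btop C i = n-1),
      (2 ^ (n - C.card + 2 * lcount C i - i) - 2 ^ lcount C i) = 0 := by
    apply Finset.sum_eq_zero
    intro i hi
    rw [Finset.mem_filter] at hi
    obtain ⟨hiC, hbt⟩ := hi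
    have hin : i < n := Finset.mem_range.mp (hC hiC)
    have hblk := block hiC (n-1) (by have := btop_ge C i; omega) (by omega)
    have hlast : lcount C (n-1) + 1 = C.card := by
      have : C ∩ Finset.range (n-1) = C.erase (n-1) := by
        ext x
        simp only [Finset.mem_inter, Finset.mem_range, Finset.mem_erase]
        constructor
        · rintro ⟨hx, hlt⟩; exact ⟨by omega, hx⟩
        · rintro ⟨hne, hx⟩
          have := Finset.mem_range.mp (hC hx)
          exact ⟨hx, by omega⟩
      unfold lcount
      rw [this, Finset.card_erase_of_mem hblk.1]
      have : 1 ≤ C.card := Finset.card_pos.mpr ⟨i, hiC⟩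
      omega
    have hg := pguard hC hiC
    have : n - C.card + 2 * lcount C i - i = lcount C i := by omega
    rw [this]
    omega
  rw [hzero, zero_add]
  -- per-fiber bound
  have hfibb : ∀ t ∈ S, ∑ i ∈ C.filter (fun i => btop C i = t),
      (2 ^ (n - C.card + 2 * lcount C i - i) - 2 ^ lcount C i)
      ≤ 4 * 2 ^ (n - C.card + 2 * lcount C t - (t + 1)) := by
    intro t ht
    rw [hS, Finset.mem_filter, Finset.mem_range] at ht
    obtain ⟨htn, htC, ht1⟩ := ht
    have hst := pguard_strict hC htC ht1 (by omega)
    have hgt := pguard hC htC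
    set g : ℕ → ℕ := fun i => n - C.card + 2 * lcount C i - i with hgdef
    have hrel : ∀ i ∈ C.filter (fun i => btop C i = t),
        i ≤ t ∧ lcount C t = lcount C i + (t - i) := by
      intro i hi
      rw [Finset.mem_filter] at hi
      have hle : i ≤ t := hi.2 ▸ btop_ge C i
      exact ⟨hle, (block hi.1 t hle (le_of_eq hi.2.symm)).2⟩
    calc ∑ i ∈ C.filter (fun i => btop C i = t),
          (2 ^ (n - C.card + 2 * lcount C i - i) - 2 ^ lcount C i)
        ≤ ∑ i ∈ C.filter (fun i => btop C i = t), 2 ^ g i :=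
          Finset.sum_le_sum (fun i _ => Nat.sub_le _ _)
      _ = ∑ m ∈ (C.filter (fun i => btop C i = t)).image g, 2 ^ m := by
          rw [Finset.sum_image]
          intro x hx y hy hxy
          have hgx := pguard hC (Finset.mem_filter.mp hx).1
          have hgy := pguard hC (Finset.mem_filter.mp hy).1
          have h1 := hrel x hx
          have h2 := hrel y hy
          rw [hgdef] at hxy
          simp only at hxy
          omega
      _ ≤ ∑ m ∈ Finset.range (g t + 1), 2 ^ m := by
          apply Finset.sum_le_sum_of_subset
          intro m hm
          rw [Finset.mem_image] at hm
          obtain ⟨i, hi, rfl⟩ := hm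
          have hgi := pguard hC (Finset.mem_filter.mp hi).1
          have h1 := hrel i hi
          rw [Finset.mem_range, hgdef]
          simp only
          omega
      _ ≤ 2 ^ (g t + 1) := by have := sum_two_pow (g t + 1); omega
      _ ≤ 4 * 2 ^ (n - C.card + 2 * lcount C t - (t + 1)) := by
          have : g t + 1 = (n - C.card + 2 * lcount C t - (t + 1)) + 2 := by
            rw [hgdef]; simp only; omega
          rw [this, pow_succ, pow_succ]
          omega
  calc ∑ t ∈ S, ∑ i ∈ C.filter (fun i => btop C i = t),
        (2 ^ (n - C.card + 2 * lcount C i - i) - 2 ^ lcount C i)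
      ≤ ∑ t ∈ S, 4 * 2 ^ (n - C.card + 2 * lcount C t - (t + 1)) :=
        Finset.sum_le_sum hfibb
    _ = 4 * ∑ t ∈ S, 2 ^ (n - C.card + 2 * lcount C t - (t + 1)) := by
        rw [Finset.mul_sum]


/-- The expected potential after one uniformly random step of probabilistic bubble-sort
drops by the factor `1 - 1/(4(n-1))`. -/
theorem expected_potential_one_step (n : ℕ) (hn : 2 ≤ n) (C : Finset ℕ)
    (hC : C ⊆ Finset.range n) :
    (1 / ((n : ℝ) - 1)) * ∑ j ∈ Finset.range (n - 1), (potential n (bstep C j) : ℝ) ≤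
      (1 - 1 / (4 * ((n : ℝ) - 1))) * (potential n C : ℝ) := by
  classical
  set S := (Finset.range (n-1)).filter (fun j => j ∈ C ∧ j + 1 ∉ C) with hS
  set D : ℝ := ∑ j ∈ S, ((2 : ℝ) ^ (n - C.card + 2 * lcount C j - (j + 1))) with hD
  have hsplit : ∀ j ∈ Finset.range (n-1), (potential n (bstep C j) : ℝ) =
      (potential n C : ℝ) -
        (if j ∈ C ∧ j + 1 ∉ C then ((2:ℝ) ^ (n - C.card + 2 * lcount C j - (j + 1))) else 0) := by
    intro j hjr
    rw [Finset.mem_range] at hjr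
    by_cases h : j ∈ C ∧ j + 1 ∉ C
    · rw [if_pos h]
      have h2 := potential_bstep hC h.1 h.2 (by omega)
      have h3 : (potential n (bstep C j) : ℝ) +
          (2:ℝ) ^ (n - C.card + 2 * lcount C j - (j + 1)) = (potential n C : ℝ) := by
        exact_mod_cast congrArg (Nat.cast : ℕ → ℝ) h2
      linarith
    · rw [if_neg h]
      unfold bstep
      rw [if_neg h, sub_zero]
  rw [Finset.sum_congr rfl hsplit, Finset.sum_sub_distrib, Finset.sum_const,
    Finset.card_range, ← Finset.sum_filter]
  have hcast : ((n - 1 : ℕ) : ℝ) = (n : ℝ) - 1 := by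
    rw [Nat.cast_sub (by omega)]; norm_num
  rw [nsmul_eq_mul, hcast, ← hS, ← hD]
  have hB : (potential n C : ℝ) ≤ 4 * D := by
    have := potential_le hn hC
    rw [hD, hS]
    push_cast
    exact_mod_cast this
  have hx : (0:ℝ) < (n : ℝ) - 1 := by
    have : (2:ℝ) ≤ n := by exact_mod_cast hn
    linarith
  have hP : (0:ℝ) ≤ (potential n C : ℝ) := Nat.cast_nonneg _
  have hDpos : (0:ℝ) ≤ D := Finset.sum_nonneg (fun j _ => by positivity)
  rw [one_div, inv_mul_le_iff₀ hx]
  have expand : ((n:ℝ) - 1) * ((1 - 1 / (4 * ((n:ℝ) - 1))) * (potential n C : ℝ))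
      = ((n:ℝ) - 1) * (potential n C : ℝ) - (potential n C : ℝ) / 4 := by
    field_simp
  rw [expand]
  linarith
end

section
/- For every integer n ≥ 1 and every configuration C ⊆ {0,...,n-1} with k = |C|, the potential satisfies P(C) = 0 if and only if C = {n-k, n-k+1, ..., n-1}, i.e., if and only if the corresponding zero-one sequence is sorted in increasing order (all zeros precede all ones). -/
lemma lcount_le_card (C : Finset ℕ) (i : ℕ) : lcount C i ≤ C.card :=
  Finset.card_le_card Finset.inter_subset_left

lemma key_upper {n : ℕ} {C : Finset ℕ} (hC : C ⊆ Finset.range n) {i : ℕ} (hi : i ∈ C) :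
    i + (C.card - lcount C i) ≤ n := by
  have h1 : C.card = lcount C i + (C ∩ Finset.Ico i n).card := by
    rw [lcount, ← Finset.card_union_of_disjoint]
    · congr 1
      ext x
      simp only [Finset.mem_union, Finset.mem_inter, Finset.mem_range, Finset.mem_Ico]
      constructor
      · intro hx
        have hxn := Finset.mem_range.mp (hC hx)
        rcases lt_or_ge x i with hlt | hge
        · exact Or.inl ⟨hx, hlt⟩
        · exact Or.inr ⟨hx, hge, hxn⟩
      · rintro (⟨h, _⟩ | ⟨h, _⟩) <;> exact h
    · apply Finset.disjoint_left.mpr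
      intro x hx hx'
      simp only [Finset.mem_inter, Finset.mem_range, Finset.mem_Ico] at hx hx'
      omega
  have h2 : (C ∩ Finset.Ico i n).card ≤ n - i :=
    le_of_le_of_eq (Finset.card_le_card Finset.inter_subset_right) (Nat.card_Ico i n)
  have h3 : i < n := Finset.mem_range.mp (hC hi)
  omega

/-- The potential vanishes exactly on the sorted configuration `{n-k,…,n-1}`. -/
theorem potential_eq_zero_iff_sorted (n : ℕ) (hn : 1 ≤ n) (C : Finset ℕ)
    (hC : C ⊆ Finset.range n) :
    potential n C = 0 ↔ C = Finset.Ico (n - C.card) n := by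
  have hk : C.card ≤ n := by simpa using Finset.card_le_card hC
  have hiff : potential n C = 0 ↔ ∀ i ∈ C, n - C.card + lcount C i ≤ i := by
    rw [potential, Finset.sum_eq_zero_iff]
    apply forall₂_congr
    intro i hi
    have hl := lcount_le_card C i
    have hin := Finset.mem_range.mp (hC hi)
    rw [Nat.sub_eq_zero_iff_le]
    constructor
    · intro h
      have := (Nat.pow_le_pow_iff_right (by norm_num : 1 < 2)).mp h
      omega
    · intro h
      exact Nat.pow_le_pow_right (by norm_num) (by omega)
  rw [hiff]
  constructor
  · intro h
    apply Finset.eq_of_subset_of_card_le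
    · intro i hi
      rw [Finset.mem_Ico]
      have h1 := key_upper hC hi
      have h2 := h i hi
      have h3 := lcount_le_card C i
      have h4 := Finset.mem_range.mp (hC hi)
      omega
    · rw [Nat.card_Ico]; omega
  · intro h i hi
    have hi' := hi
    rw [h, Finset.mem_Ico] at hi'
    have hlc : lcount C i = i - (n - C.card) := by
      have hset : C ∩ Finset.range i = Finset.Ico (n - C.card) i := by
        conv_lhs => rw [h]
        ext x
        simp only [Finset.mem_inter, Finset.mem_Ico, Finset.mem_range]
        omega
      rw [lcount, hset, Nat.card_Ico]
    omega
end

section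
/- For every integer n ≥ 1 and every configuration C ⊆ {0,...,n-1}, the potential satisfies P(C) < 2^n. -/
lemma lcount_le_self (C : Finset ℕ) (i : ℕ) : lcount C i ≤ i := by
  calc (C ∩ Finset.range i).card ≤ (Finset.range i).card :=
        Finset.card_le_card (Finset.inter_subset_right)
    _ = i := Finset.card_range i

lemma lcount_lt_card (C : Finset ℕ) {i : ℕ} (hi : i ∈ C) : lcount C i < C.card := by
  apply Finset.card_lt_card
  constructor
  · exact Finset.inter_subset_left
  · intro h
    have := h hi
    simp at this

lemma lcount_strictMono (C : Finset ℕ) {i j : ℕ} (hi : i ∈ C) (hij : i < j) :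
    lcount C i < lcount C j := by
  apply Finset.card_lt_card
  constructor
  · exact Finset.inter_subset_inter le_rfl (Finset.range_subset_range.2 hij.le)
  · intro h
    have : i ∈ C ∩ Finset.range j := Finset.mem_inter.2 ⟨hi, Finset.mem_range.2 hij⟩
    have := h this
    simp at this

lemma sum_two_pow_range (k : ℕ) : ∑ i ∈ Finset.range k, 2 ^ i = 2 ^ k - 1 := by
  induction k with
  | zero => simp
  | succ k ih =>
    rw [Finset.sum_range_succ, ih, pow_succ]
    have : 1 ≤ 2 ^ k := Nat.one_le_two_pow
    omega

lemma sum_two_pow_lcount (C : Finset ℕ) :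
    ∑ i ∈ C, 2 ^ lcount C i ≤ 2 ^ C.card - 1 := by
  have hinj : Set.InjOn (lcount C) C := by
    intro a ha b hb hab
    by_contra hne
    rcases lt_or_gt_of_ne hne with h | h
    · exact absurd hab (Nat.ne_of_lt (lcount_strictMono C ha h))
    · exact absurd hab.symm (Nat.ne_of_lt (lcount_strictMono C hb h))
  rw [← Finset.sum_image (g := lcount C) (f := fun j => (2:ℕ) ^ j) (s := C)
    (fun a ha b hb => hinj ha hb)]
  have hsub : C.image (lcount C) ⊆ Finset.range C.card := by
    intro j hj
    rcases Finset.mem_image.1 hj with ⟨i, hi, rfl⟩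
    exact Finset.mem_range.2 (lcount_lt_card C hi)
  calc ∑ j ∈ C.image (lcount C), 2 ^ j ≤ ∑ j ∈ Finset.range C.card, 2 ^ j :=
        Finset.sum_le_sum_of_subset hsub
    _ = 2 ^ C.card - 1 := sum_two_pow_range _

/-- The potential of any configuration is always below `2^n`. -/
theorem potential_lt_two_pow (n : ℕ) (hn : 1 ≤ n) (C : Finset ℕ)
    (hC : C ⊆ Finset.range n) :
    potential n C < 2 ^ n := by
  have hk : C.card ≤ n := by
    simpa using Finset.card_le_card hC
  have h1 : potential n C ≤ ∑ i ∈ C, 2 ^ (n - C.card + lcount C i) := by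
    apply Finset.sum_le_sum
    intro i hi
    have hl := lcount_le_self C i
    have he : n - C.card + 2 * lcount C i - i ≤ n - C.card + lcount C i := by omega
    calc 2 ^ (n - C.card + 2 * lcount C i - i) - 2 ^ lcount C i
        ≤ 2 ^ (n - C.card + 2 * lcount C i - i) := Nat.sub_le _ _
      _ ≤ 2 ^ (n - C.card + lcount C i) := Nat.pow_le_pow_right (by norm_num) he
  have h2 : ∑ i ∈ C, 2 ^ (n - C.card + lcount C i)
      = 2 ^ (n - C.card) * ∑ i ∈ C, 2 ^ lcount C i := by
    rw [Finset.mul_sum]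
    exact Finset.sum_congr rfl fun i _ => by rw [pow_add]
  have h3 : 2 ^ (n - C.card) * ∑ i ∈ C, 2 ^ lcount C i
      ≤ 2 ^ (n - C.card) * (2 ^ C.card - 1) :=
    Nat.mul_le_mul_left _ (sum_two_pow_lcount C)
  have h4 : 2 ^ (n - C.card) * (2 ^ C.card - 1) < 2 ^ n := by
    have : 2 ^ (n - C.card) * 2 ^ C.card = 2 ^ n := by
      rw [← pow_add]; congr 1; omega
    have hpos : 0 < 2 ^ (n - C.card) := Nat.pow_pos (by norm_num)
    calc 2 ^ (n - C.card) * (2 ^ C.card - 1)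
        < 2 ^ (n - C.card) * 2 ^ C.card :=
          Nat.mul_lt_mul_of_pos_left
            (Nat.sub_lt (Nat.pow_pos (by norm_num)) one_pos) hpos
      _ = 2 ^ n := this
  omega
end

section
/- Let n ≥ 2, let C be a configuration with k = |C|, and let y ∈ C with y ≤ n-2 and y+1 ∉ C. Then the configuration C' = (C \ {y}) ∪ {y+1} obtained by the swap at position y satisfies P(C') = P(C) - 2^{n-k+2l_y-y-1}, where l_y = |C ∩ {0,...,y-1}|. -/
/-- A swap at a position `y ∈ C` with `y ≤ n-2` and `y+1 ∉ C` decreases the potential by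
exactly `2^(n-k+2l_y-y-1)`. -/
theorem potential_swap (n : ℕ) (hn : 2 ≤ n) (C : Finset ℕ) (hC : C ⊆ Finset.range n)
    (y : ℕ) (hyC : y ∈ C) (hy : y ≤ n - 2) (hy1 : y + 1 ∉ C) :
    potential n (insert (y + 1) (C.erase y)) =
      potential n C - 2 ^ (n - C.card + 2 * lcount C y - y - 1) := by
  have hyn : y + 2 ≤ n := by omega
  have hy1e : y + 1 ∉ C.erase y := fun h => hy1 (Finset.mem_of_mem_erase h)
  have hkpos : 1 ≤ C.card := Finset.card_pos.mpr ⟨y, hyC⟩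
  have hcard : (insert (y + 1) (C.erase y)).card = C.card := by
    rw [Finset.card_insert_of_notMem hy1e, Finset.card_erase_of_mem hyC]
    omega
  -- |C ∩ range (y+1)| = l_y + 1
  have hsplit : C ∩ Finset.range (y + 1) = insert y (C ∩ Finset.range y) := by
    ext j
    simp only [Finset.mem_inter, Finset.mem_insert, Finset.mem_range]
    constructor
    · rintro ⟨hj, hjy⟩
      rcases eq_or_ne j y with rfl | hne
      · exact Or.inl rfl
      · exact Or.inr ⟨hj, by omega⟩
    · rintro (rfl | ⟨hj, hjy⟩)
      · exact ⟨hyC, by omega⟩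
      · exact ⟨hj, by omega⟩
  have hly1 : (C ∩ Finset.range (y + 1)).card = lcount C y + 1 := by
    rw [hsplit, Finset.card_insert_of_notMem (by simp)]
    rfl
  -- key inequality : C.card + y + 1 ≤ n + l_y
  have hineq : C.card + y + 1 ≤ n + lcount C y := by
    have h1 : (C ∩ Finset.range (y + 1)).card + (C \ Finset.range (y + 1)).card = C.card :=
      Finset.card_inter_add_card_sdiff C (Finset.range (y + 1))
    have h2 : C \ Finset.range (y + 1) ⊆ Finset.range n \ Finset.range (y + 2) := by
      intro j hj
      simp only [Finset.mem_sdiff, Finset.mem_range] at hj ⊢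
      have hjC := hj.1
      have : j ≠ y + 1 := fun h => hy1 (h ▸ hjC)
      have := hj.2
      exact ⟨Finset.mem_range.mp (hC hjC), by omega⟩
    have h3 : (C \ Finset.range (y + 1)).card ≤ n - (y + 2) := by
      have := Finset.card_le_card h2
      rwa [Finset.card_sdiff_of_subset (Finset.range_subset_range.mpr (by omega)),
        Finset.card_range, Finset.card_range] at this
    omega
  have hkn : C.card ≤ n := by
    have := Finset.card_le_card hC
    rwa [Finset.card_range] at this
  have ha : lcount C y + 1 ≤ n - C.card + 2 * lcount C y - y := by omega
  -- lcount is unchanged on C.erase y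
  have hlc : ∀ i ∈ C.erase y, lcount (insert (y + 1) (C.erase y)) i = lcount C i := by
    intro i hi
    have hiy : i ≠ y := Finset.ne_of_mem_erase hi
    have hiC : i ∈ C := Finset.mem_of_mem_erase hi
    have hiy1 : i ≠ y + 1 := fun h => hy1 (h ▸ hiC)
    rcases le_or_gt i y with hle | hgt
    · have : insert (y + 1) (C.erase y) ∩ Finset.range i = C ∩ Finset.range i := by
        ext j
        simp only [Finset.mem_inter, Finset.mem_insert, Finset.mem_erase, Finset.mem_range]
        constructor
        · rintro ⟨(rfl | ⟨hjy, hj⟩), hji⟩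
          · omega
          · exact ⟨hj, hji⟩
        · rintro ⟨hj, hji⟩
          exact ⟨Or.inr ⟨by omega, hj⟩, hji⟩
      simp [lcount, this]
    · have hi2 : y + 2 ≤ i := by omega
      have hset : insert (y + 1) (C.erase y) ∩ Finset.range i
          = insert (y + 1) ((C ∩ Finset.range i).erase y) := by
        ext j
        simp only [Finset.mem_inter, Finset.mem_insert, Finset.mem_erase, Finset.mem_range]
        constructor
        · rintro ⟨(rfl | ⟨hjy, hj⟩), hji⟩
          · exact Or.inl rfl
          · exact Or.inr ⟨hjy, hj, hji⟩
        · rintro (rfl | ⟨hjy, hj, hji⟩)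
          · exact ⟨Or.inl rfl, by omega⟩
          · exact ⟨Or.inr ⟨hjy, hj⟩, hji⟩
      have hyin : y ∈ C ∩ Finset.range i := by
        simp only [Finset.mem_inter, Finset.mem_range]
        exact ⟨hyC, by omega⟩
      have hy1nin : y + 1 ∉ (C ∩ Finset.range i).erase y := fun h =>
        hy1 (Finset.mem_inter.mp (Finset.mem_of_mem_erase h)).1
      have hcpos : 1 ≤ (C ∩ Finset.range i).card := Finset.card_pos.mpr ⟨y, hyin⟩
      unfold lcount
      rw [hset, Finset.card_insert_of_notMem hy1nin, Finset.card_erase_of_mem hyin]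
      omega
  -- lcount (C') (y+1) = lcount C y
  have hlcy : lcount (insert (y + 1) (C.erase y)) (y + 1) = lcount C y := by
    have : insert (y + 1) (C.erase y) ∩ Finset.range (y + 1) = C ∩ Finset.range y := by
      ext j
      simp only [Finset.mem_inter, Finset.mem_insert, Finset.mem_erase, Finset.mem_range]
      constructor
      · rintro ⟨(rfl | ⟨hjy, hj⟩), hji⟩
        · omega
        · exact ⟨hj, by omega⟩
      · rintro ⟨hj, hji⟩
        exact ⟨Or.inr ⟨by omega, hj⟩, by omega⟩
    simp [lcount, this]
  -- now compute
  rw [potential, potential, hcard]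
  rw [Finset.sum_insert hy1e]
  have hS : ∑ i ∈ C.erase y,
      (2 ^ (n - C.card + 2 * lcount (insert (y + 1) (C.erase y)) i - i)
        - 2 ^ lcount (insert (y + 1) (C.erase y)) i)
      = ∑ i ∈ C.erase y,
      (2 ^ (n - C.card + 2 * lcount C i - i) - 2 ^ lcount C i) :=
    Finset.sum_congr rfl fun i hi => by rw [hlc i hi]
  rw [hS, hlcy, ← Finset.add_sum_erase C _ hyC]
  set l := lcount C y with hl
  set S := ∑ i ∈ C.erase y, (2 ^ (n - C.card + 2 * lcount C i - i) - 2 ^ lcount C i) with hSdef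
  set a := n - C.card + 2 * l - y with haa
  have hexp1 : n - C.card + 2 * l - (y + 1) = a - 1 := by omega
  have hexp2 : n - C.card + 2 * l - y - 1 = a - 1 := by omega
  rw [hexp1, hexp2]
  have h2a : 2 ^ a = 2 ^ (a - 1) + 2 ^ (a - 1) := by
    have h := pow_succ 2 (a - 1)
    rw [show a - 1 + 1 = a by omega] at h
    omega
  have hpow : 2 ^ l ≤ 2 ^ (a - 1) := Nat.pow_le_pow_right (by norm_num) (by omega)
  clear_value l S a
  show 2 ^ (a - 1) - 2 ^ l + S = 2 ^ a - 2 ^ l + S - 2 ^ (a - 1)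
  generalize hq : 2 ^ a = q at h2a ⊢
  generalize hp : 2 ^ (a - 1) = p at h2a hpow ⊢
  generalize he : 2 ^ l = e at hpow ⊢
  omega
end

section
/- For every even integer n ≥ 2, the expected number of interactions to form all n/2 matching edges satisfies n(n-1)/2 ≤ Σ_{i=0}^{n/2-1} n(n-1)/((n-2i)(n-2i-1)) ≤ n(n-1)·ln 2; in particular this sum is Θ(n²). -/
private lemma mfei_inv_le_log_sub (k : ℕ) (hk : 1 ≤ k) :
    (1:ℝ)/((k:ℝ)+1) ≤ Real.log ((k:ℝ)+1) - Real.log k := by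
  have hk0 : (0:ℝ) < k := by exact_mod_cast hk
  have h1 : (0:ℝ) < (k:ℝ)/((k:ℝ)+1) := by positivity
  have h2 := Real.log_le_sub_one_of_pos h1
  rw [Real.log_div (ne_of_gt hk0) (by positivity)] at h2
  have he : (k:ℝ)/((k:ℝ)+1) - 1 = -(1/((k:ℝ)+1)) := by field_simp; ring
  linarith

private lemma mfei_alt_eq (m : ℕ) :
    ∑ j ∈ Finset.range m, (1:ℝ)/((2*(j:ℝ)+1)*(2*(j:ℝ)+2)) =
    ∑ k ∈ Finset.Ico m (2*m), (1:ℝ)/((k:ℝ)+1) := by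
  induction m with
  | zero => simp
  | succ m ih =>
    rcases Nat.eq_zero_or_pos m with rfl | hm
    · norm_num
    · rw [Finset.sum_range_succ, ih]
      have h2 : 2*(m+1) = (2*m) + 1 + 1 := by ring
      rw [h2, Finset.sum_Ico_succ_top (by omega), Finset.sum_Ico_succ_top (by omega)]
      rw [show ∑ k ∈ Finset.Ico m (2*m), (1:ℝ)/((k:ℝ)+1)
            = 1/((m:ℝ)+1) + ∑ k ∈ Finset.Ico (m+1) (2*m), (1:ℝ)/((k:ℝ)+1) from
          Finset.sum_eq_sum_Ico_succ_bot (by omega) _]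
      have key : (1:ℝ)/((m:ℝ)+1) + 1/((2*(m:ℝ)+1)*(2*(m:ℝ)+2))
          = 1/(2*(m:ℝ)+1) + 1/(2*(m:ℝ)+2) := by
        have hm1 : (0:ℝ) < (m:ℝ)+1 := by positivity
        field_simp
        ring
      push_cast
      rw [show (2*(m:ℝ)+1+1) = 2*(m:ℝ)+2 from by ring]
      linarith

private lemma mfei_refl_eq (m : ℕ) :
    ∑ i ∈ Finset.range m, (1:ℝ)/((2*(m:ℝ) - 2*(i:ℝ)) * (2*(m:ℝ) - 2*(i:ℝ) - 1)) =
    ∑ j ∈ Finset.range m, (1:ℝ)/((2*(j:ℝ)+1)*(2*(j:ℝ)+2)) := by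
  rw [← Finset.sum_range_reflect
    (fun i => (1:ℝ)/((2*(m:ℝ) - 2*(i:ℝ)) * (2*(m:ℝ) - 2*(i:ℝ) - 1))) m]
  apply Finset.sum_congr rfl
  intro j hj
  have hj' : j < m := Finset.mem_range.mp hj
  have hc : ((m - 1 - j : ℕ) : ℝ) = (m:ℝ) - 1 - (j:ℝ) := by
    have h1 : 1 ≤ m := by omega
    have h2 : j ≤ m - 1 := by omega
    push_cast [Nat.cast_sub h2, Nat.cast_sub h1]
    ring
  simp only [hc]
  ring_nf

private lemma mfei_lower (m : ℕ) (hm : 1 ≤ m) :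
    (1:ℝ)/2 ≤ ∑ k ∈ Finset.Ico m (2*m), (1:ℝ)/((k:ℝ)+1) := by
  have hb : ∀ k ∈ Finset.Ico m (2*m), (1:ℝ)/(2*(m:ℝ)) ≤ 1/((k:ℝ)+1) := by
    intro k hk
    have hk' := Finset.mem_Ico.mp hk
    have h1 : (0:ℝ) < (k:ℝ)+1 := by positivity
    have h2 : (k:ℝ)+1 ≤ 2*(m:ℝ) := by
      have : k + 1 ≤ 2*m := hk'.2
      exact_mod_cast this
    exact one_div_le_one_div_of_le h1 h2
  have hcard := Finset.card_nsmul_le_sum (Finset.Ico m (2*m))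
    (fun k => (1:ℝ)/((k:ℝ)+1)) ((1:ℝ)/(2*(m:ℝ))) hb
  have hc : (Finset.Ico m (2*m)).card = m := by rw [Nat.card_Ico]; omega
  rw [hc, nsmul_eq_mul] at hcard
  have hm0 : (0:ℝ) < (m:ℝ) := by exact_mod_cast hm
  have : (1:ℝ)/2 = (m:ℝ) * (1/(2*(m:ℝ))) := by field_simp
  rw [this]
  exact hcard

private lemma mfei_upper (m : ℕ) (hm : 1 ≤ m) :
    ∑ k ∈ Finset.Ico m (2*m), (1:ℝ)/((k:ℝ)+1) ≤ Real.log 2 := by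
  have hstep : ∑ k ∈ Finset.Ico m (2*m), (1:ℝ)/((k:ℝ)+1)
      ≤ ∑ k ∈ Finset.Ico m (2*m), (Real.log ((k:ℝ)+1) - Real.log k) := by
    apply Finset.sum_le_sum
    intro k hk
    have hk1 : 1 ≤ k := le_trans hm (Finset.mem_Ico.mp hk).1
    exact mfei_inv_le_log_sub k hk1
  have htel : ∑ k ∈ Finset.Ico m (2*m), (Real.log ((k:ℝ)+1) - Real.log k)
      = Real.log 2 := by
    rw [Finset.sum_Ico_eq_sum_range]
    have h2m : 2*m - m = m := by omega
    rw [h2m]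
    have : ∀ j ∈ Finset.range m,
        (Real.log (((m + j : ℕ):ℝ)+1) - Real.log ((m + j : ℕ):ℝ))
        = (fun j : ℕ => Real.log ((m:ℝ) + (j:ℝ))) (j+1) - (fun j : ℕ => Real.log ((m:ℝ) + (j:ℝ))) j := by
      intro j _
      simp only []
      push_cast
      ring_nf
    rw [Finset.sum_congr rfl this, Finset.sum_range_sub (fun j : ℕ => Real.log ((m:ℝ) + (j:ℝ)))]
    have hm0 : ((m:ℝ)) ≠ 0 := by
      have : (0:ℝ) < (m:ℝ) := by exact_mod_cast hm
      linarith
    have : (m:ℝ) + (m:ℝ) = 2 * (m:ℝ) := by ring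
    rw [this, Real.log_mul (by norm_num) hm0]
    simp
  linarith

/-- For even `n ≥ 2`, the expected number of interactions to form all `n/2` matching
edges, `Σ_{i=0}^{n/2-1} n(n-1)/((n-2i)(n-2i-1))`, is between `n(n-1)/2` and
`n(n-1)·ln 2`; in particular, it is `Θ(n²)`. -/
theorem matching_formation_expected_interactions (n : ℕ) (hn : 2 ≤ n) (heven : Even n) :
    (n : ℝ) * ((n : ℝ) - 1) / 2 ≤
      (∑ i ∈ Finset.range (n / 2),
        (n : ℝ) * ((n : ℝ) - 1) / (((n : ℝ) - 2 * (i : ℝ)) * ((n : ℝ) - 2 * (i : ℝ) - 1))) ∧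
    (∑ i ∈ Finset.range (n / 2),
        (n : ℝ) * ((n : ℝ) - 1) / (((n : ℝ) - 2 * (i : ℝ)) * ((n : ℝ) - 2 * (i : ℝ) - 1))) ≤
      (n : ℝ) * ((n : ℝ) - 1) * Real.log 2 := by
  obtain ⟨m, rfl⟩ := heven
  have hm : 1 ≤ m := by omega
  have hdiv : (m + m) / 2 = m := by omega
  rw [hdiv]
  have hcast : ((m + m : ℕ) : ℝ) = 2 * (m:ℝ) := by push_cast; ring
  have hsum : (∑ i ∈ Finset.range m,
        ((m+m:ℕ) : ℝ) * (((m+m:ℕ) : ℝ) - 1) / ((((m+m:ℕ) : ℝ) - 2 * (i : ℝ)) * ((((m+m:ℕ)) : ℝ) - 2 * (i : ℝ) - 1)))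
      = ((m+m:ℕ) : ℝ) * (((m+m:ℕ) : ℝ) - 1) *
        ∑ i ∈ Finset.range m, (1:ℝ)/((2*(m:ℝ) - 2*(i:ℝ)) * (2*(m:ℝ) - 2*(i:ℝ) - 1)) := by
    rw [Finset.mul_sum]
    apply Finset.sum_congr rfl
    intro i _
    rw [hcast, mul_one_div]
  rw [hsum, mfei_refl_eq, mfei_alt_eq]
  have hlow := mfei_lower m hm
  have hup := mfei_upper m hm
  have hpos : (0:ℝ) ≤ ((m+m:ℕ) : ℝ) * (((m+m:ℕ) : ℝ) - 1) := by
    rw [hcast]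
    have hm0 : (1:ℝ) ≤ (m:ℝ) := by exact_mod_cast hm
    nlinarith
  constructor
  · calc ((m+m:ℕ) : ℝ) * (((m+m:ℕ) : ℝ) - 1) / 2
        = ((m+m:ℕ) : ℝ) * (((m+m:ℕ) : ℝ) - 1) * (1/2) := by ring
      _ ≤ _ := by exact mul_le_mul_of_nonneg_left hlow hpos
  · exact mul_le_mul_of_nonneg_left hup hpos
end

section
/- The normalized expected number of interactions to form the first ⌊n/4⌋+1 matching edges converges to 1/2: lim_{n→∞} (1/n)·Σ_{i=0}^{⌊n/4⌋} n(n-1)/((n-2i)(n-2i-1)) = 1/2. -/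
open Filter

private lemma inv_add_tendsto (c : ℝ) :
    Tendsto (fun n : ℕ => ((n : ℝ) + c)⁻¹) atTop (nhds 0) :=
  (tendsto_atTop_add_const_right atTop c tendsto_natCast_atTop_atTop).inv_tendsto_atTop

private lemma term_lower (m d : ℝ) (hm : 0 ≤ m) (hd : 5 ≤ d) :
    m / (2 * (d - 1)) - m / (2 * (d + 1)) ≤ m / (d * (d - 1)) := by
  have h1 : (0:ℝ) < d - 1 := by linarith
  have h2 : (0:ℝ) < d + 1 := by linarith
  have h3 : (0:ℝ) < d := by linarith
  have heq : m / (2 * (d - 1)) - m / (2 * (d + 1)) = m / ((d - 1) * (d + 1)) := by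
    field_simp
    ring
  rw [heq]
  exact div_le_div_of_nonneg_left hm (by positivity) (by nlinarith)

private lemma term_upper (m d : ℝ) (hm : 0 ≤ m) (hd : 5 ≤ d) :
    m / (d * (d - 1)) ≤ m / (2 * (d - 3)) - m / (2 * (d - 1)) := by
  have h1 : (0:ℝ) < d - 1 := by linarith
  have h2 : (0:ℝ) < d - 3 := by linarith
  have h3 : (0:ℝ) < d := by linarith
  have heq : m / (2 * (d - 3)) - m / (2 * (d - 1)) = m / ((d - 3) * (d - 1)) := by
    field_simp
    ring
  rw [heq]
  exact div_le_div_of_nonneg_left hm (by positivity) (by nlinarith)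

/-- The normalized expected number of interactions to form the first `⌊n/4⌋+1` matching
edges converges to `1/2`. -/
theorem matching_quarter_expected_parallel_time :
    Tendsto (fun n : ℕ =>
        (1 / (n : ℝ)) * ∑ i ∈ Finset.range (n / 4 + 1),
          (n : ℝ) * ((n : ℝ) - 1) / (((n : ℝ) - 2 * (i : ℝ)) * ((n : ℝ) - 2 * (i : ℝ) - 1)))
      atTop (nhds (1 / 2)) := by
  have hLo : Tendsto (fun n : ℕ =>
      ((n:ℝ) - 1) / ((n:ℝ) + 4) - ((n:ℝ) - 1) / (2 * ((n:ℝ) + 1))) atTop (nhds (1/2)) := by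
    have h1 : Tendsto (fun n : ℕ =>
        ((1:ℝ) - 5 * ((n:ℝ) + 4)⁻¹) - (1/2 - ((n:ℝ) + 1)⁻¹)) atTop (nhds (1/2)) := by
      have := (((inv_add_tendsto 4).const_mul 5).const_sub 1).sub
        ((inv_add_tendsto 1).const_sub (1/2))
      convert this using 2
      norm_num
    refine h1.congr fun n => ?_
    have h4 : (n:ℝ) + 4 ≠ 0 := by positivity
    have h1' : (n:ℝ) + 1 ≠ 0 := by positivity
    field_simp
    ring
  have hHi : Tendsto (fun n : ℕ =>
      ((n:ℝ) - 1) / ((n:ℝ) - 8) - 1/2) atTop (nhds (1/2)) := by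
    have h1 : Tendsto (fun n : ℕ =>
        ((1:ℝ) + 7 * ((n:ℝ) + (-8))⁻¹) - 1/2) atTop (nhds (1/2)) := by
      have := ((((inv_add_tendsto (-8)).const_mul 7).const_add 1).sub_const (1/2))
      convert this using 2
      norm_num
    refine h1.congr' ?_
    filter_upwards [eventually_ge_atTop 9] with n hn
    have hn8 : (0:ℝ) < (n:ℝ) - 8 := by
      have : (9:ℝ) ≤ (n:ℝ) := by exact_mod_cast hn
      linarith
    have hne : (n:ℝ) + (-8) ≠ 0 := by
      intro h; rw [← sub_eq_add_neg] at h; linarith [hn8, h.ge, h.le]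
    rw [← sub_eq_add_neg] at hne ⊢
    field_simp
    ring
  refine tendsto_of_tendsto_of_tendsto_of_le_of_le' hLo hHi ?_ ?_
  · -- lower bound
    filter_upwards [eventually_ge_atTop 10] with n hn
    have hnR : (10:ℝ) ≤ (n:ℝ) := by exact_mod_cast hn
    have hne : (n:ℝ) ≠ 0 := by linarith
    have hm : (0:ℝ) ≤ (n:ℝ) - 1 := by linarith
    set k : ℕ := n / 4 with hk
    have hk1 : (k:ℝ) ≤ (n:ℝ) / 4 := by
      rw [hk]
      exact_mod_cast Nat.cast_div_le
    have hk2 : (n:ℝ) / 4 - 1 ≤ (k:ℝ) := by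
      have hmod := Nat.div_add_mod n 4
      have hlt : n % 4 < 4 := Nat.mod_lt n (by norm_num)
      have h1 : (4 * (k:ℝ) + ((n % 4 : ℕ):ℝ)) = (n:ℝ) := by rw [hk]; exact_mod_cast hmod
      have h2 : ((n % 4 : ℕ):ℝ) < 4 := by exact_mod_cast hlt
      linarith
    have hEsum : (1 / (n : ℝ)) * ∑ i ∈ Finset.range (k + 1),
          (n : ℝ) * ((n : ℝ) - 1) / (((n : ℝ) - 2 * (i : ℝ)) * ((n : ℝ) - 2 * (i : ℝ) - 1))
        = ∑ i ∈ Finset.range (k + 1),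
          ((n : ℝ) - 1) / (((n : ℝ) - 2 * (i : ℝ)) * ((n : ℝ) - 2 * (i : ℝ) - 1)) := by
      rw [Finset.mul_sum]
      refine Finset.sum_congr rfl fun i _ => ?_
      rw [mul_div_assoc, one_div, inv_mul_cancel_left₀ hne]
    rw [hEsum]
    set a : ℕ → ℝ := fun i => ((n:ℝ) - 1) / (2 * ((n:ℝ) - 2 * (i:ℝ) + 1)) with ha
    have htel : ∑ i ∈ Finset.range (k + 1), (a (i + 1) - a i) = a (k + 1) - a 0 :=
      Finset.sum_range_sub a (k + 1)
    have hterm : ∀ i ∈ Finset.range (k + 1),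
        a (i + 1) - a i ≤ ((n : ℝ) - 1) / (((n : ℝ) - 2 * (i : ℝ)) * ((n : ℝ) - 2 * (i : ℝ) - 1)) := by
      intro i hi
      have hik : (i:ℝ) ≤ (k:ℝ) := by
        exact_mod_cast Nat.lt_succ_iff.mp (Finset.mem_range.mp hi)
      have hd : (5:ℝ) ≤ (n:ℝ) - 2 * (i:ℝ) := by linarith [hk1]
      have h1 : a (i + 1) = ((n:ℝ) - 1) / (2 * (((n:ℝ) - 2 * (i:ℝ)) - 1)) := by
        rw [ha]; push_cast; ring_nf
      have h2 : a i = ((n:ℝ) - 1) / (2 * (((n:ℝ) - 2 * (i:ℝ)) + 1)) := by rw [ha]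
      rw [h1, h2]
      exact term_lower _ _ hm hd
    have hsum_le : a (k + 1) - a 0 ≤ ∑ i ∈ Finset.range (k + 1),
        ((n : ℝ) - 1) / (((n : ℝ) - 2 * (i : ℝ)) * ((n : ℝ) - 2 * (i : ℝ) - 1)) := by
      rw [← htel]
      exact Finset.sum_le_sum hterm
    refine le_trans ?_ hsum_le
    have ha0 : a 0 = ((n:ℝ) - 1) / (2 * ((n:ℝ) + 1)) := by
      rw [ha]; norm_num
    have hak : a (k + 1) = ((n:ℝ) - 1) / (2 * ((n:ℝ) - 2 * (k:ℝ) - 1)) := by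
      rw [ha]; push_cast; ring_nf
    rw [ha0, hak]
    have hpos : (0:ℝ) < 2 * ((n:ℝ) - 2 * (k:ℝ) - 1) := by linarith [hk1]
    have hle : 2 * ((n:ℝ) - 2 * (k:ℝ) - 1) ≤ (n:ℝ) + 4 := by linarith [hk2]
    exact sub_le_sub_right (div_le_div_of_nonneg_left hm hpos hle) _
  · -- upper bound
    filter_upwards [eventually_ge_atTop 10] with n hn
    have hnR : (10:ℝ) ≤ (n:ℝ) := by exact_mod_cast hn
    have hne : (n:ℝ) ≠ 0 := by linarith
    have hm : (0:ℝ) ≤ (n:ℝ) - 1 := by linarith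
    set k : ℕ := n / 4 with hk
    have hk1 : (k:ℝ) ≤ (n:ℝ) / 4 := by
      rw [hk]
      exact_mod_cast Nat.cast_div_le
    have hEsum : (1 / (n : ℝ)) * ∑ i ∈ Finset.range (k + 1),
          (n : ℝ) * ((n : ℝ) - 1) / (((n : ℝ) - 2 * (i : ℝ)) * ((n : ℝ) - 2 * (i : ℝ) - 1))
        = ∑ i ∈ Finset.range (k + 1),
          ((n : ℝ) - 1) / (((n : ℝ) - 2 * (i : ℝ)) * ((n : ℝ) - 2 * (i : ℝ) - 1)) := by
      rw [Finset.mul_sum]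
      refine Finset.sum_congr rfl fun i _ => ?_
      rw [mul_div_assoc, one_div, inv_mul_cancel_left₀ hne]
    rw [hEsum]
    set b : ℕ → ℝ := fun i => ((n:ℝ) - 1) / (2 * ((n:ℝ) - 2 * (i:ℝ) - 1)) with hb
    have htel : ∑ i ∈ Finset.range (k + 1), (b (i + 1) - b i) = b (k + 1) - b 0 :=
      Finset.sum_range_sub b (k + 1)
    have hterm : ∀ i ∈ Finset.range (k + 1),
        ((n : ℝ) - 1) / (((n : ℝ) - 2 * (i : ℝ)) * ((n : ℝ) - 2 * (i : ℝ) - 1))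
          ≤ b (i + 1) - b i := by
      intro i hi
      have hik : (i:ℝ) ≤ (k:ℝ) := by
        exact_mod_cast Nat.lt_succ_iff.mp (Finset.mem_range.mp hi)
      have hd : (5:ℝ) ≤ (n:ℝ) - 2 * (i:ℝ) := by linarith [hk1]
      have h1 : b (i + 1) = ((n:ℝ) - 1) / (2 * (((n:ℝ) - 2 * (i:ℝ)) - 3)) := by
        rw [hb]; push_cast; ring_nf
      have h2 : b i = ((n:ℝ) - 1) / (2 * (((n:ℝ) - 2 * (i:ℝ)) - 1)) := by rw [hb]
      rw [h1, h2]
      exact term_upper _ _ hm hd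
    have hsum_le : ∑ i ∈ Finset.range (k + 1),
        ((n : ℝ) - 1) / (((n : ℝ) - 2 * (i : ℝ)) * ((n : ℝ) - 2 * (i : ℝ) - 1))
          ≤ b (k + 1) - b 0 := by
      rw [← htel]
      exact Finset.sum_le_sum hterm
    refine hsum_le.trans ?_
    have hb0 : b 0 = 1/2 := by
      have hne1 : (2:ℝ) * ((n:ℝ) - 2*((0:ℕ):ℝ) - 1) ≠ 0 := by push_cast; linarith
      simp only [hb]
      rw [div_eq_div_iff hne1 two_ne_zero]
      push_cast
      ring
    have hbk : b (k + 1) = ((n:ℝ) - 1) / (2 * ((n:ℝ) - 2 * (k:ℝ) - 3)) := by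
      rw [hb]; push_cast; ring_nf
    rw [hb0, hbk]
    have hpos : (0:ℝ) < (n:ℝ) - 8 := by linarith
    have hle : (n:ℝ) - 8 ≤ 2 * ((n:ℝ) - 2 * (k:ℝ) - 3) := by linarith [hk1]
    exact sub_le_sub_right (div_le_div_of_nonneg_left hm hpos hle) _
end
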